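/- Let 0<q<1 and let m ≥ 2 be an integer. Then 2ζ[m,1] = m ζ[m+1] + (1−q)(m−2) ζ[m] − Σ_{k=1}^{m-2} ζ[m−k] ζ[k+1]. -/

import Mathlib

/-! Write `c_k = q^k/[k]_q`; then the summand of `ζ[n+1]` is `c_k^n/[k]_q`, and
`c_k = 1/[k]_q - (1-q)` because `(1-q)[k]_q = 1 - q^k`.

Splitting a product of two series over `ℕ × ℕ` into the parts below, above and on the diagonal
gives the stuffle relation `ζ[a]ζ[b] = ζ[a,b] + ζ[b,a] + ζ[a+b] + (1-q)ζ[a+b-1]`, the diagonal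
contributing `c_k^{a+b-2}/[k]_q^2 = c_k^{a+b-1}/[k]_q + (1-q)c_k^{a+b-2}/[k]_q`.

For the sum formula `Σ_{a=2}^{w-1} ζ[a,w-a] = ζ[w]`, fix `j = k + l`. From
`[k+l]_q = [k]_q + q^k[l]_q = [l]_q + q^l[k]_q`, the geometric sum
`Σ_a c_j^{a-1}c_k^{w-a-1}/([j]_q[k]_q)` equals `c_k^{w-2}(c_l - c_j)/[k]_q - c_j^{w-2}c_l/[j]_q`.
Summed over `k, l ≥ 1` these are the full product `ζ[w-1]·Σ c` minus its parts above and below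
the diagonal, so only the diagonal `Σ_k c_k^{w-1}/[k]_q = ζ[w]` survives.

Summing the stuffle relation over `a + b = m + 1` with `a, b ≥ 2` and removing the double zeta
values with the sum formula leaves `2ζ[m,1]`. -/

/-- The `q`-analog of a natural number: `[k]_q = (1-q^k)/(1-q)`. -/
noncomputable def qnum (q : ℝ) (k : ℕ) : ℝ := (1 - q ^ k) / (1 - q)

/-- The single `q`-zeta value `ζ[n] = Σ_{k≥1} q^{(n-1)k}/[k]_q^n`. -/
noncomputable def qzeta (q : ℝ) (n : ℕ) : ℝ :=
  ∑' k : ℕ, q ^ ((n - 1) * (k + 1)) / (qnum q (k + 1)) ^ n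

/-- The double `q`-zeta value
`ζ[a,b] = Σ_{k₁>k₂>0} (q^{(a-1)k₁}/[k₁]_q^a)(q^{(b-1)k₂}/[k₂]_q^b)`. -/
noncomputable def qzeta2 (q : ℝ) (a b : ℕ) : ℝ :=
  ∑' p : {p : ℕ × ℕ // p.2 < p.1 ∧ 0 < p.2},
    (q ^ ((a - 1) * p.1.1) / (qnum q p.1.1) ^ a) *
      (q ^ ((b - 1) * p.1.2) / (qnum q p.1.2) ^ b)

theorem below_diag_injective : Function.Injective fun z : ℕ × ℕ => (z.1 + z.2 + 1, z.1) :=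
  fun x y h => by
    simp only [Prod.mk.injEq] at h
    ext <;> omega

theorem above_diag_injective : Function.Injective fun z : ℕ × ℕ => (z.1, z.1 + z.2 + 1) :=
  fun x y h => by
    simp only [Prod.mk.injEq] at h
    ext <;> omega

theorem tsum_prod_eq_below_add_above_add_diag {E : Type*} [NormedAddCommGroup E]
    [CompleteSpace E] {F : ℕ × ℕ → E} (hF : Summable F) :
    ∑' p, F p = ∑' z : ℕ × ℕ, F (z.1 + z.2 + 1, z.1) + ∑' z : ℕ × ℕ, F (z.1, z.1 + z.2 + 1)
      + ∑' k, F (k, k) := by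
  set below := Set.range fun z : ℕ × ℕ => (z.1 + z.2 + 1, z.1)
  set above := Set.range fun z : ℕ × ℕ => (z.1, z.1 + z.2 + 1)
  set diag := Set.range fun k : ℕ => (k, k)
  have mem_below {p : ℕ × ℕ} : p ∈ below ↔ p.2 < p.1 :=
    ⟨by rintro ⟨z, rfl⟩; dsimp only; omega,
      fun h => ⟨(p.2, p.1 - p.2 - 1), by ext <;> dsimp only; omega⟩⟩
  have mem_above {p : ℕ × ℕ} : p ∈ above ↔ p.1 < p.2 :=
    ⟨by rintro ⟨z, rfl⟩; dsimp only; omega,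
      fun h => ⟨(p.1, p.2 - p.1 - 1), by ext <;> dsimp only; omega⟩⟩
  have mem_diag {p : ℕ × ℕ} : p ∈ diag ↔ p.1 = p.2 :=
    ⟨by rintro ⟨k, rfl⟩; rfl, fun h => ⟨p.1, by ext <;> dsimp only; omega⟩⟩
  have hsplit : F = below.indicator F + above.indicator F + diag.indicator F := by
    ext p
    simp only [Pi.add_apply, Set.indicator, mem_below, mem_above, mem_diag]
    rcases lt_trichotomy p.2 p.1 with h | h | h
    · simp [h, h.ne', h.not_gt]
    · simp [h]
    · simp [h, h.ne, h.not_gt]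
  rw [← tsum_range F below_diag_injective, ← tsum_range F above_diag_injective,
    ← tsum_range F fun _ _ h => (Prod.mk.inj h).1, tsum_subtype, tsum_subtype, tsum_subtype,
    ← Summable.tsum_add (hF.indicator _) (hF.indicator _),
    ← Summable.tsum_add ((hF.indicator _).add (hF.indicator _)) (hF.indicator _)]
  exact congrArg tsum hsplit

section
variable {q : ℝ}

noncomputable def qterm (q : ℝ) (n k : ℕ) : ℝ := q ^ ((n - 1) * k) / qnum q k ^ n

noncomputable def qfrac (q : ℝ) (k : ℕ) : ℝ := q ^ k / qnum q k

theorem qnum_add (k l : ℕ) : qnum q (k + l) = qnum q k + q ^ k * qnum q l := by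
  simp only [qnum, pow_add]
  ring

theorem qfrac_eq_inv_sub (hq : q ≠ 1) {k : ℕ} (hk : qnum q k ≠ 0) :
    qfrac q k = (qnum q k)⁻¹ - (1 - q) := by
  have hq' : 1 - q ≠ 0 := sub_ne_zero.2 hq.symm
  have : (1 - q) * qnum q k = 1 - q ^ k := mul_div_cancel₀ _ hq'
  rw [qfrac, eq_sub_iff_add_eq]
  field_simp
  linear_combination this

theorem qterm_succ (n k : ℕ) : qterm q (n + 1) k = qfrac q k ^ n / qnum q k := by
  rw [qterm, qfrac, Nat.add_sub_cancel, mul_comm, pow_mul, div_pow, pow_succ, div_div]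

theorem qterm_mul_qfrac (n k : ℕ) : qterm q (n + 1) k * qfrac q k = qterm q (n + 2) k := by
  rw [qterm_succ, qterm_succ, pow_succ]
  ring

theorem qterm_mul_qterm_self (hq : q ≠ 1) {k : ℕ} (hk : qnum q k ≠ 0) (a b : ℕ) :
    qterm q (a + 1) k * qterm q (b + 1) k
      = qterm q (a + b + 2) k + (1 - q) * qterm q (a + b + 1) k := by
  simp only [qterm_succ]
  rw [pow_succ, qfrac_eq_inv_sub hq hk]
  field_simp
  ring

theorem sum_qterm_mul_qterm {k l : ℕ} (hk : qnum q k ≠ 0) (hl : qnum q l ≠ 0)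
    (hkl : qnum q (k + l) ≠ 0) (n : ℕ) :
    ∑ i ∈ Finset.range n, qterm q (i + 2) (k + l) * qterm q (n - i) k
      = qterm q (n + 1) k * (qfrac q l - qfrac q (k + l))
        - qterm q (n + 1) (k + l) * qfrac q l := by
  set x := qfrac q (k + l)
  set y := qfrac q k
  set S := ∑ i ∈ Finset.range n, x ^ i * y ^ (n - 1 - i)
  have hterm : ∀ i ∈ Finset.range n, qterm q (i + 2) (k + l) * qterm q (n - i) k
      = x / (qnum q (k + l) * qnum q k) * (x ^ i * y ^ (n - 1 - i)) := by
    intro i hi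
    rw [show n - i = (n - 1 - i) + 1 by grind, qterm_succ, qterm_succ, pow_succ]
    ring
  have hA : x / (qnum q (k + l) * qnum q k) = qfrac q l * (y - x) / qnum q (k + l) := by
    have := qnum_add (q := q) l k
    rw [add_comm l k] at this
    simp only [x, y, qfrac, pow_add]
    field_simp
    linear_combination -(q ^ k * q ^ l) * this
  have hB : (qfrac q l - x) / qnum q k = qfrac q l / qnum q (k + l) := by
    have := qnum_add (q := q) k l
    simp only [x, qfrac, pow_add]
    field_simp
    linear_combination q ^ l * this
  rw [Finset.sum_congr rfl hterm, ← Finset.mul_sum, qterm_succ, qterm_succ]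
  linear_combination (-(qfrac q l) / qnum q (k + l)) * geom_sum₂_mul x y n + S * hA
    - y ^ n * hB

theorem one_le_qnum (hq0 : 0 < q) (hq1 : q < 1) {k : ℕ} (hk : k ≠ 0) : 1 ≤ qnum q k := by
  rw [qnum, le_div_iff₀ (sub_pos.2 hq1), one_mul]
  linarith [pow_le_of_le_one hq0.le hq1.le hk]

theorem qnum_ne_zero (hq0 : 0 < q) (hq1 : q < 1) {k : ℕ} (hk : k ≠ 0) : qnum q k ≠ 0 :=
  (zero_lt_one.trans_le (one_le_qnum hq0 hq1 hk)).ne'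

theorem qterm_nonneg (hq0 : 0 < q) (hq1 : q < 1) (n : ℕ) {k : ℕ} (hk : k ≠ 0) :
    0 ≤ qterm q n k :=
  div_nonneg (pow_nonneg hq0.le _) (pow_nonneg (zero_le_one.trans (one_le_qnum hq0 hq1 hk)) _)

theorem qterm_le_pow (hq0 : 0 < q) (hq1 : q < 1) (n : ℕ) {k : ℕ} (hk : k ≠ 0) :
    qterm q n k ≤ q ^ ((n - 1) * k) :=
  div_le_self (pow_nonneg hq0.le _) (one_le_pow₀ (one_le_qnum hq0 hq1 hk))

theorem qfrac_nonneg (hq0 : 0 < q) (hq1 : q < 1) {k : ℕ} (hk : k ≠ 0) : 0 ≤ qfrac q k :=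
  div_nonneg (pow_nonneg hq0.le _) (zero_le_one.trans (one_le_qnum hq0 hq1 hk))

theorem qfrac_le_pow (hq0 : 0 < q) (hq1 : q < 1) {k : ℕ} (hk : k ≠ 0) : qfrac q k ≤ q ^ k :=
  div_le_self (pow_nonneg hq0.le _) (one_le_qnum hq0 hq1 hk)

theorem qzeta_eq_tsum_qterm (n : ℕ) : qzeta q n = ∑' k, qterm q n (k + 1) := rfl

def qzeta2IndexEquiv : ℕ × ℕ ≃ {p : ℕ × ℕ // p.2 < p.1 ∧ 0 < p.2} where
  toFun z := ⟨(z.1 + z.2 + 2, z.1 + 1), by dsimp only; omega⟩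
  invFun p := (p.1.2 - 1, p.1.1 - p.1.2 - 1)
  left_inv z := by ext <;> dsimp only <;> omega
  right_inv p := by
    obtain ⟨⟨i, j⟩, h⟩ := p
    ext <;> dsimp only at h ⊢ <;> omega

theorem qzeta2_eq_tsum (a b : ℕ) :
    qzeta2 q a b = ∑' z : ℕ × ℕ, qterm q a (z.1 + z.2 + 2) * qterm q b (z.1 + 1) :=
  (qzeta2IndexEquiv.tsum_eq _).symm

theorem summable_qterm (hq0 : 0 < q) (hq1 : q < 1) {n : ℕ} (hn : 2 ≤ n) :
    Summable fun k => qterm q n (k + 1) := by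
  refine Summable.of_nonneg_of_le (fun k => qterm_nonneg hq0 hq1 n k.succ_ne_zero)
    (fun k => (qterm_le_pow hq0 hq1 n k.succ_ne_zero).trans ?_)
    (summable_geometric_of_lt_one hq0.le hq1)
  exact pow_le_pow_of_le_one hq0.le hq1.le
    ((k.le_succ).trans (Nat.le_mul_of_pos_left _ (by omega)))

theorem summable_qfrac (hq0 : 0 < q) (hq1 : q < 1) : Summable fun k => qfrac q (k + 1) :=
  Summable.of_nonneg_of_le (fun k => qfrac_nonneg hq0 hq1 k.succ_ne_zero)
    (fun k => (qfrac_le_pow hq0 hq1 k.succ_ne_zero).trans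
      (pow_le_pow_of_le_one hq0.le hq1.le k.le_succ))
    (summable_geometric_of_lt_one hq0.le hq1)

theorem summable_qzeta2_summand (hq0 : 0 < q) (hq1 : q < 1) {a : ℕ} (ha : 2 ≤ a) (b : ℕ) :
    Summable fun z : ℕ × ℕ => qterm q a (z.1 + z.2 + 2) * qterm q b (z.1 + 1) := by
  have hgeom := summable_geometric_of_lt_one hq0.le hq1
  refine Summable.of_nonneg_of_le
    (fun z => mul_nonneg (qterm_nonneg hq0 hq1 _ (by omega)) (qterm_nonneg hq0 hq1 _ (by omega)))
    (fun z => ?_) (hgeom.mul_of_nonneg hgeom (fun k => pow_nonneg hq0.le k)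
      (fun k => pow_nonneg hq0.le k))
  calc qterm q a (z.1 + z.2 + 2) * qterm q b (z.1 + 1) ≤ q ^ (z.1 + z.2) * 1 := by
        refine mul_le_mul ((qterm_le_pow hq0 hq1 a (by omega)).trans ?_)
          ((qterm_le_pow hq0 hq1 b (by omega)).trans (pow_le_one₀ hq0.le hq1.le))
          (qterm_nonneg hq0 hq1 _ (by omega)) (pow_nonneg hq0.le _)
        exact pow_le_pow_of_le_one hq0.le hq1.le
          ((by omega : z.1 + z.2 ≤ z.1 + z.2 + 2).trans (Nat.le_mul_of_pos_left _ (by omega)))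
    _ = q ^ z.1 * q ^ z.2 := by rw [mul_one, pow_add]

theorem qzeta_mul_qzeta (hq0 : 0 < q) (hq1 : q < 1) {a b : ℕ} (ha : 2 ≤ a) (hb : 2 ≤ b) :
    qzeta q a * qzeta q b
      = qzeta2 q a b + qzeta2 q b a + qzeta q (a + b) + (1 - q) * qzeta q (a + b - 1) := by
  have hfa := (summable_qterm hq0 hq1 ha).norm
  have hfb := (summable_qterm hq0 hq1 hb).norm
  have hdiag (k : ℕ) : qterm q a (k + 1) * qterm q b (k + 1)
      = qterm q (a + b) (k + 1) + (1 - q) * qterm q (a + b - 1) (k + 1) := by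
    obtain ⟨a, rfl⟩ : ∃ a', a = a' + 1 := ⟨a - 1, by omega⟩
    obtain ⟨b, rfl⟩ : ∃ b', b = b' + 1 := ⟨b - 1, by omega⟩
    rw [qterm_mul_qterm_self hq1.ne (qnum_ne_zero hq0 hq1 k.succ_ne_zero),
      show a + 1 + (b + 1) - 1 = a + b + 1 by omega, show a + 1 + (b + 1) = a + b + 2 by ring]
  have hprod := summable_mul_of_summable_norm hfa hfb
  rw [qzeta_eq_tsum_qterm a, qzeta_eq_tsum_qterm b, tsum_mul_tsum_of_summable_norm hfa hfb,
    tsum_prod_eq_below_add_above_add_diag hprod, qzeta2_eq_tsum a b, qzeta2_eq_tsum b a]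
  have habove : ∑' z : ℕ × ℕ, qterm q a (z.1 + 1) * qterm q b (z.1 + z.2 + 1 + 1)
      = ∑' z : ℕ × ℕ, qterm q b (z.1 + z.2 + 2) * qterm q a (z.1 + 1) :=
    tsum_congr fun z => mul_comm _ _
  dsimp only
  rw [habove, tsum_congr hdiag, Summable.tsum_add (summable_qterm hq0 hq1 (by omega))
    ((summable_qterm hq0 hq1 (by omega)).mul_left _), tsum_mul_left, ← add_assoc]
  rfl

theorem sum_qzeta2_eq_qzeta (hq0 : 0 < q) (hq1 : q < 1) {w : ℕ} (hw : 3 ≤ w) :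
    ∑ k ∈ Finset.Icc 1 (w - 2), qzeta2 q (k + 1) (w - 1 - k) = qzeta q w := by
  obtain ⟨n, rfl⟩ : ∃ n, w = n + 2 := ⟨w - 2, by omega⟩
  set T : ℕ → ℝ := fun i => qterm q (n + 1) (i + 1)
  set C : ℕ → ℝ := fun i => qfrac q (i + 1)
  have hT : Summable T := summable_qterm hq0 hq1 (by omega)
  have hC : Summable C := summable_qfrac hq0 hq1
  have hTC : Summable fun z : ℕ × ℕ => T z.1 * C z.2 :=
    summable_mul_of_summable_norm hT.norm hC.norm
  have habove : Summable fun z : ℕ × ℕ => T z.1 * C (z.1 + z.2 + 1) :=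
    (hTC.comp_injective above_diag_injective :)
  have hbelow : Summable fun z : ℕ × ℕ => T (z.1 + z.2 + 1) * C z.2 :=
    (hTC.comp_injective (i := fun z : ℕ × ℕ => (z.1 + z.2 + 1, z.2)) fun x y h => by
      simp only [Prod.mk.injEq] at h; ext <;> omega :)
  have hpoint (z : ℕ × ℕ) :
      ∑ k ∈ Finset.Icc 1 n, qterm q (k + 1) (z.1 + z.2 + 2) * qterm q (n + 1 - k) (z.1 + 1)
        = T z.1 * C z.2 - T z.1 * C (z.1 + z.2 + 1) - T (z.1 + z.2 + 1) * C z.2 := by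
    have h := sum_qterm_mul_qterm (qnum_ne_zero hq0 hq1 (by omega : z.1 + 1 ≠ 0))
      (qnum_ne_zero hq0 hq1 (by omega : z.2 + 1 ≠ 0)) (qnum_ne_zero hq0 hq1 (by omega)) n
    rw [show z.1 + 1 + (z.2 + 1) = z.1 + z.2 + 2 by ring] at h
    rw [← Finset.Ico_add_one_right_eq_Icc, Finset.sum_Ico_eq_sum_range, Nat.add_sub_cancel]
    rw [Finset.sum_congr rfl fun i _ => by
      rw [show 1 + i + 1 = i + 2 by ring, show n + 1 - (1 + i) = n - i by omega], h, mul_sub]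
  have hbelow_swap : ∑' z : ℕ × ℕ, T (z.1 + z.2 + 1) * C z.2
      = ∑' z : ℕ × ℕ, T (z.1 + z.2 + 1) * C z.1 :=
    calc ∑' z : ℕ × ℕ, T (z.1 + z.2 + 1) * C z.2
        = ∑' z : ℕ × ℕ, T (z.2 + z.1 + 1) * C z.2 :=
          tsum_congr fun z => by rw [Nat.add_comm z.1 z.2]
      _ = _ := (Equiv.prodComm ℕ ℕ).tsum_eq fun z => T (z.1 + z.2 + 1) * C z.1
  calc ∑ k ∈ Finset.Icc 1 (n + 2 - 2), qzeta2 q (k + 1) (n + 2 - 1 - k)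
      = ∑' z : ℕ × ℕ, ∑ k ∈ Finset.Icc 1 n,
          qterm q (k + 1) (z.1 + z.2 + 2) * qterm q (n + 1 - k) (z.1 + 1) := by
        simp only [qzeta2_eq_tsum, Nat.add_sub_cancel]
        exact (Summable.tsum_finsetSum fun a ha =>
          summable_qzeta2_summand hq0 hq1 (by grind) _).symm
    _ = ∑' z : ℕ × ℕ, T z.1 * C z.2 - ∑' z : ℕ × ℕ, T z.1 * C (z.1 + z.2 + 1)
          - ∑' z : ℕ × ℕ, T (z.1 + z.2 + 1) * C z.2 := by
        rw [tsum_congr hpoint, Summable.tsum_sub (hTC.sub habove) hbelow,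
          Summable.tsum_sub hTC habove]
    _ = ∑' k, T k * C k := by
        rw [hbelow_swap, tsum_prod_eq_below_add_above_add_diag hTC]
        ring
    _ = qzeta q (n + 2) := tsum_congr fun k => qterm_mul_qfrac n (k + 1)

end

/-- The q-analog of Euler's evaluation of ζ(m,1). -/
theorem q_euler_formula (q : ℝ) (hq0 : 0 < q) (hq1 : q < 1) (m : ℕ) (hm : 2 ≤ m) :
    2 * qzeta2 q m 1
      = (m : ℝ) * qzeta q (m + 1) + (1 - q) * ((m : ℝ) - 2) * qzeta q m
          - ∑ k ∈ Finset.Icc 1 (m - 2), qzeta q (m - k) * qzeta q (k + 1) := by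
  obtain ⟨n, rfl⟩ : ∃ n, m = n + 2 := ⟨m - 2, by omega⟩
  have hstuffle (k : ℕ) (hk : k ∈ Finset.Icc 1 n) : qzeta q (n + 2 - k) * qzeta q (k + 1)
      = qzeta2 q (n + 2 - k) (k + 1) + qzeta2 q (k + 1) (n + 2 - k)
        + qzeta q (n + 3) + (1 - q) * qzeta q (n + 2) := by
    have hk := Finset.mem_Icc.1 hk
    rw [qzeta_mul_qzeta hq0 hq1 (by omega) (by omega), show n + 2 - k + (k + 1) = n + 3 by omega,
      show n + 3 - 1 = n + 2 by omega]
  have hreflect : ∑ k ∈ Finset.Icc 1 n, qzeta2 q (n + 2 - k) (k + 1)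
      = ∑ k ∈ Finset.Icc 1 n, qzeta2 q (k + 1) (n + 2 - k) := by
    refine Finset.sum_nbij' (fun k => n + 1 - k) (fun k => n + 1 - k) ?_ ?_ ?_ ?_ ?_ <;>
      intro k hk <;> simp only [Finset.mem_Icc] at hk ⊢
    all_goals first | omega | congr 1 <;> omega
  have hsum : ∑ k ∈ Finset.Icc 1 n, qzeta2 q (k + 1) (n + 2 - k) + qzeta2 q (n + 2) 1
      = qzeta q (n + 3) := by
    rw [← sum_qzeta2_eq_qzeta hq0 hq1 (w := n + 3) (by omega), show n + 3 - 2 = n + 1 by omega,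
      Finset.sum_Icc_succ_top (by omega), show n + 3 - 1 - (n + 1) = 1 by omega,
      show n + 3 - 1 = n + 2 by omega]
  rw [Nat.add_sub_cancel, Finset.sum_congr rfl hstuffle, Finset.sum_add_distrib,
    Finset.sum_add_distrib, Finset.sum_add_distrib, hreflect, ← Finset.mul_sum]
  simp only [Finset.sum_const, Nat.card_Icc, nsmul_eq_mul]
  push_cast
  linear_combination 2 * hsum
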